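/- arXiv:1906.01139 — 2 statements merged into one kernel-verified Lean document; each statement's English description precedes it below -/
import Mathlib

section
/- Fix constants κ>0 and β∈(0,1), and let α* be the unique solution in (0,β) of h_κ(α)=0. Then g_κ is strictly decreasing on (0,α*] and strictly increasing on [α*,β); consequently the minimum of g_κ over (0,β) is attained uniquely at α*, and the minimum value equals g_κ(α*) = β/(α*)^κ. -/
/-!
Since `h_κ'(α) = (α ^ κ - β) / α ^ 2`, the function `h_κ` decreases on `(0, β ^ (1/κ)]` and
increases afterwards; as `h_κ(β) = -∫_β^1 t ^ (κ-2) dt < 0`, its zero `α*` lies in the decreasing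
part, so `h_κ > 0` on `(0, α*)` and `h_κ < 0` on `(α*, β)`. The identity
`α ^ κ ∫_α^1 t ^ (-κ) dt = α ∫_α^1 t ^ (κ-2) dt` turns the quotient rule into
`g_κ'(α) = -β α ^ (1-κ) h_κ(α) / (β - α) ^ 2`, so `g_κ` has the sign pattern of `-h_κ`; at `α*`
the same identity gives `g_κ(α*) = β / α* ^ κ`.
-/

open Set intervalIntegral

noncomputable def hFun (κ β α : ℝ) : ℝ := β / α - (∫ t in α..(1:ℝ), t ^ (κ - 2)) - 1

noncomputable def gFun (κ β α : ℝ) : ℝ := (∫ t in α..(1:ℝ), t ^ (-κ)) * β / (β - α)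

lemma zero_notMem_uIcc_one {a : ℝ} (ha : 0 < a) : (0 : ℝ) ∉ uIcc a 1 := by
  simp [mem_uIcc, ha.not_ge]

lemma hasDerivAt_integral_rpow_one {r a : ℝ} (ha : 0 < a) :
    HasDerivAt (fun u => ∫ t in u..(1:ℝ), t ^ r) (-(a ^ r)) a :=
  integral_hasDerivAt_left (intervalIntegrable_rpow (Or.inr (zero_notMem_uIcc_one ha)))
    ((continuousOn_id.rpow_const fun _ hx => Or.inl (ne_of_gt hx)).stronglyMeasurableAtFilter
      isOpen_Ioi a ha)
    (Real.continuousAt_rpow_const a r (Or.inl ha.ne'))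

lemma integral_rpow_one {r a : ℝ} (ha : 0 < a) (hr : r ≠ -1) :
    ∫ t in a..(1:ℝ), t ^ r = (1 - a ^ (r + 1)) / (r + 1) := by
  rw [integral_rpow (Or.inr ⟨hr, zero_notMem_uIcc_one ha⟩), Real.one_rpow]

/-- The substitution `t ↦ a / t` turns one integral into the other. -/
lemma rpow_mul_integral_rpow_neg {κ a : ℝ} (ha : 0 < a) :
    a ^ κ * ∫ t in a..(1:ℝ), t ^ (-κ) = a * ∫ t in a..(1:ℝ), t ^ (κ - 2) := by
  rcases eq_or_ne κ 1 with rfl | hκ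
  · norm_num
  have h₁ : -κ + 1 ≠ 0 := by contrapose! hκ; linarith
  have h₂ : κ - 2 + 1 ≠ 0 := by contrapose! hκ; linarith
  rw [integral_rpow_one ha (by contrapose! h₁; linarith),
    integral_rpow_one ha (by contrapose! h₂; linarith)]
  have e₁ : a ^ κ * a ^ (-κ + 1) = a := by
    rw [← Real.rpow_add ha, add_neg_cancel_left, Real.rpow_one]
  have e₂ : a * a ^ (κ - 2 + 1) = a ^ κ := by
    rw [mul_comm, ← Real.rpow_add_one ha.ne']; ring_nf
  field_simp
  linear_combination (1 - κ) * e₁ + (1 - κ) * e₂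

lemma hasDerivAt_hFun {κ β a : ℝ} (ha : 0 < a) :
    HasDerivAt (hFun κ β) ((a ^ κ - β) / a ^ 2) a := by
  have hβ : HasDerivAt (fun α => β / α) (-(β / a ^ 2)) a := by
    simpa [div_eq_mul_inv] using (hasDerivAt_inv ha.ne').const_mul β
  refine ((hβ.sub (hasDerivAt_integral_rpow_one (r := κ - 2) ha)).sub_const 1).congr_deriv ?_
  rw [Real.rpow_sub ha, Real.rpow_two]
  field_simp
  ring

lemma hasDerivAt_gFun {κ β a : ℝ} (ha : 0 < a) (haβ : a ≠ β) :
    HasDerivAt (gFun κ β) (-(β * a ^ (1 - κ) * hFun κ β a) / (β - a) ^ 2) a := by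
  have hnum := (hasDerivAt_integral_rpow_one (r := -κ) ha).mul_const β
  have hden := (hasDerivAt_id' a).const_sub β
  have hβa : β - a ≠ 0 := sub_ne_zero.2 haβ.symm
  refine (hnum.div hden hβa).congr_deriv ?_
  have key := rpow_mul_integral_rpow_neg (κ := κ) ha
  rw [hFun, Real.rpow_neg ha.le, Real.rpow_sub ha, Real.rpow_one]
  field_simp
  linear_combination β * key

lemma continuousOn_hFun {κ β : ℝ} : ContinuousOn (hFun κ β) (Ioi 0) :=
  fun _ hx => (hasDerivAt_hFun hx).continuousAt.continuousWithinAt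

lemma strictAntiOn_hFun {κ β : ℝ} (hκ : 0 < κ) (hβ : 0 ≤ β) :
    StrictAntiOn (hFun κ β) (Ioc 0 (β ^ κ⁻¹)) := by
  refine strictAntiOn_of_deriv_neg (convex_Ioc _ _) (continuousOn_hFun.mono Ioc_subset_Ioi_self)
    fun x hx => ?_
  rw [interior_Ioc] at hx
  rw [(hasDerivAt_hFun hx.1).deriv]
  have : x ^ κ < β := (Real.lt_rpow_inv_iff_of_pos hx.1.le hβ hκ).1 hx.2
  exact div_neg_of_neg_of_pos (by linarith) (by positivity [hx.1])

lemma monotoneOn_hFun {κ β : ℝ} (hκ : 0 < κ) (hβ : 0 < β) :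
    MonotoneOn (hFun κ β) (Ici (β ^ κ⁻¹)) := by
  have hm : 0 < β ^ κ⁻¹ := Real.rpow_pos_of_pos hβ _
  refine monotoneOn_of_deriv_nonneg (convex_Ici _)
    (continuousOn_hFun.mono fun x hx => hm.trans_le hx) ?_ fun x hx => ?_
  · rw [interior_Ici]
    exact fun x hx => (hasDerivAt_hFun (hm.trans hx)).differentiableAt.differentiableWithinAt
  rw [interior_Ici] at hx
  rw [(hasDerivAt_hFun (hm.trans hx)).deriv]
  have : β < x ^ κ := (Real.rpow_inv_lt_iff_of_pos hβ.le (hm.trans hx).le hκ).1 hx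
  exact div_nonneg (by linarith) (sq_nonneg x)

lemma hFun_self_neg {κ β : ℝ} (hβ : β ∈ Ioo (0:ℝ) 1) : hFun κ β β < 0 := by
  have : 0 < ∫ t in β..(1:ℝ), t ^ (κ - 2) :=
    intervalIntegral_pos_of_pos_on (intervalIntegrable_rpow (Or.inr (zero_notMem_uIcc_one hβ.1)))
      (fun t ht => Real.rpow_pos_of_pos (hβ.1.trans ht.1) _) hβ.2
  rw [hFun, div_self hβ.1.ne']
  linarith

lemma hFun_sign {κ β αs : ℝ} (hκ : 0 < κ) (hβ : β ∈ Ioo (0:ℝ) 1) (hαs : αs ∈ Ioo 0 β)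
    (hz : hFun κ β αs = 0) :
    (∀ a ∈ Ioo 0 αs, 0 < hFun κ β a) ∧ ∀ a ∈ Ioo αs β, hFun κ β a < 0 := by
  set m := β ^ κ⁻¹
  have hanti := strictAntiOn_hFun hκ hβ.1.le
  have hright : ∀ a ∈ Icc m β, hFun κ β a < 0 := fun a ha =>
    (monotoneOn_hFun hκ hβ.1 ha.1 (ha.1.trans ha.2) ha.2).trans_lt (hFun_self_neg hβ)
  have hαsm : αs < m := by
    by_contra! hle
    exact (hright αs ⟨hle, hαs.2.le⟩).ne hz
  refine ⟨fun a ha => hz ▸ hanti ⟨ha.1, (ha.2.trans hαsm).le⟩ ⟨hαs.1, hαsm.le⟩ ha.2,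
    fun a ha => ?_⟩
  rcases le_or_gt a m with ham | hma
  · exact hz ▸ hanti ⟨hαs.1, hαsm.le⟩ ⟨hαs.1.trans ha.1, ham⟩ ha.1
  · exact hright a ⟨hma.le, ha.2.le⟩

lemma continuousOn_gFun {κ β : ℝ} : ContinuousOn (gFun κ β) (Ioo 0 β) :=
  fun _ hx => (hasDerivAt_gFun hx.1 hx.2.ne).continuousAt.continuousWithinAt

lemma strictAntiOn_gFun {κ β αs : ℝ} (hβ : 0 < β) (hαs : αs < β)
    (hpos : ∀ a ∈ Ioo 0 αs, 0 < hFun κ β a) : StrictAntiOn (gFun κ β) (Ioc 0 αs) := by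
  refine strictAntiOn_of_deriv_neg (convex_Ioc _ _)
    (continuousOn_gFun.mono (Ioc_subset_Ioo_right hαs)) fun x hx => ?_
  rw [interior_Ioc] at hx
  rw [(hasDerivAt_gFun hx.1 (hx.2.trans hαs).ne).deriv, neg_div]
  have : 0 < β - x := by linarith [hx.2]
  have := hpos x hx
  have := Real.rpow_pos_of_pos hx.1 (1 - κ)
  exact neg_neg_of_pos (by positivity)

lemma strictMonoOn_gFun {κ β αs : ℝ} (hβ : 0 < β) (hαs : 0 < αs)
    (hneg : ∀ a ∈ Ioo αs β, hFun κ β a < 0) : StrictMonoOn (gFun κ β) (Ico αs β) := by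
  refine strictMonoOn_of_deriv_pos (convex_Ico _ _)
    (continuousOn_gFun.mono (Ico_subset_Ioo_left hαs)) fun x hx => ?_
  rw [interior_Ico] at hx
  rw [(hasDerivAt_gFun (hαs.trans hx.1) hx.2.ne).deriv]
  have : 0 < β - x := by linarith [hx.2]
  have := Real.rpow_pos_of_pos (hαs.trans hx.1) (1 - κ)
  have := mul_neg_of_pos_of_neg (mul_pos hβ this) (hneg x hx)
  exact div_pos (by linarith) (by positivity)

lemma gFun_eq_of_hFun_eq_zero {κ β a : ℝ} (ha : 0 < a) (haβ : a ≠ β) (hz : hFun κ β a = 0) :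
    gFun κ β a = β / a ^ κ := by
  have key := rpow_mul_integral_rpow_neg (κ := κ) ha
  have hJ : ∫ t in a..(1:ℝ), t ^ (κ - 2) = β / a - 1 := by rw [hFun] at hz; linarith
  have hβa : β - a ≠ 0 := sub_ne_zero.2 haβ.symm
  have haκ : a ^ κ ≠ 0 := (Real.rpow_pos_of_pos ha κ).ne'
  rw [hJ] at key
  rw [gFun, div_eq_div_iff hβa haκ]
  field_simp at key
  linear_combination β * key

theorem stmt2_general (κ β : ℝ) (hκ : 0 < κ) (hβ : β ∈ Set.Ioo (0:ℝ) 1)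
    (h g : ℝ → ℝ)
    (hh : ∀ α, h α = β / α - (∫ t in α..(1:ℝ), t ^ (κ - 2)) - 1)
    (hg : ∀ α, g α = (∫ t in α..(1:ℝ), t ^ (-κ)) * β / (β - α))
    (αs : ℝ) (hαs : αs ∈ Set.Ioo (0:ℝ) β) (hz : h αs = 0) :
    StrictAntiOn g (Set.Ioc (0:ℝ) αs) ∧ StrictMonoOn g (Set.Ico αs β) ∧
    (∀ α ∈ Set.Ioo (0:ℝ) β, α ≠ αs → g αs < g α) ∧
    g αs = β / αs ^ κ := by
  obtain rfl : h = hFun κ β := funext hh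
  obtain rfl : g = gFun κ β := funext hg
  obtain ⟨hpos, hneg⟩ := hFun_sign hκ hβ hαs hz
  have hanti := strictAntiOn_gFun hβ.1 hαs.2 hpos
  have hmono := strictMonoOn_gFun hβ.1 hαs.1 hneg
  refine ⟨hanti, hmono, fun a ha hne => ?_, gFun_eq_of_hFun_eq_zero hαs.1 hαs.2.ne hz⟩
  rcases hne.lt_or_gt with hlt | hgt
  · exact hanti ⟨ha.1, hlt.le⟩ ⟨hαs.1, le_rfl⟩ hlt
  · exact hmono ⟨le_rfl, hαs.2⟩ ⟨hgt.le, ha.2⟩ hgt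

/-- For κ > 0 and β ∈ (0,1), with
`h α = β/α − ∫_α^1 t^(κ−2) dt − 1` and `g α = (∫_α^1 t^(−κ) dt)·β/(β−α)`,
if `α*` is the unique solution of `h α = 0` in `(0,β)`, then `g` is strictly
decreasing on `(0,α*]` and strictly increasing on `[α*,β)`, the minimum of `g`
over `(0,β)` is attained uniquely at `α*`, and `g α* = β/(α*)^κ`. -/
theorem stmt2 (κ β : ℝ) (hκ : 0 < κ) (hβ : β ∈ Set.Ioo (0:ℝ) 1)
    (h g : ℝ → ℝ)
    (hh : ∀ α, h α = β / α - (∫ t in α..(1:ℝ), t ^ (κ - 2)) - 1)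
    (hg : ∀ α, g α = (∫ t in α..(1:ℝ), t ^ (-κ)) * β / (β - α))
    (αs : ℝ) (hαs : αs ∈ Set.Ioo (0:ℝ) β) (hz : h αs = 0)
    (huniq : ∀ α ∈ Set.Ioo (0:ℝ) β, h α = 0 → α = αs) :
    StrictAntiOn g (Set.Ioc (0:ℝ) αs) ∧ StrictMonoOn g (Set.Ico αs β) ∧
    (∀ α ∈ Set.Ioo (0:ℝ) β, α ≠ αs → g αs < g α) ∧
    g αs = β / αs ^ κ :=
  stmt2_general κ β hκ hβ h g hh hg αs hαs hz
end

section
/- Let X ∈ ℝ^{n×p} with rows x₁,…,xₙ ∈ ℝ^p, and let μ>0. Define S^{∖i} := ((1/n)XᵀX − (1/n)xᵢxᵢᵀ + μI_p)⁻¹ for each i. Then (1/n)·tr( ((1/n)XXᵀ + μI_n)⁻² ) = (1/n)·Σ_{i=1}^n ( 1 + (1/n)·xᵢᵀ( S^{∖i} − μ·(S^{∖i})² )xᵢ ) / ( μ + (μ/n)·xᵢᵀ S^{∖i} xᵢ )². -/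
/-!
Write `B = (1/n)XᵀX + μ`. The push-through identity `((1/n)XXᵀ + μ) X = X B` gives
`((1/n)XXᵀ + μ)⁻¹ = μ⁻¹ (1 - (1/n) X B⁻¹ Xᵀ)`, and squaring, with `(1/n)XᵀX = B - μ`,
`((1/n)XXᵀ + μ)⁻² = μ⁻² (1 - (1/n) X (B⁻¹ + μ B⁻²) Xᵀ)`. The `i`-th diagonal entry is then a
quadratic form in `xᵢ`. Since `B = (S⁽∖ⁱ⁾)⁻¹ + (1/n) xᵢxᵢᵀ`, Sherman–Morrison gives
`B⁻¹ xᵢ = S⁽∖ⁱ⁾ xᵢ / (1 + (1/n) xᵢᵀ S⁽∖ⁱ⁾ xᵢ)`, and the summand follows.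
-/

open Matrix

namespace Matrix

variable {m k R 𝕜 : Type*}

theorem mul_mul_transpose_apply [Fintype k] [CommSemiring R] (X : Matrix m k R)
    (N : Matrix k k R) (i j : m) :
    (X * N * Xᵀ) i j = X i ⬝ᵥ N *ᵥ X j := by
  rw [Matrix.mul_assoc]
  simp [mul_apply, dotProduct, mulVec]

theorem transpose_mul_self_updateRow_zero [Fintype m] [DecidableEq m] [CommRing R]
    (X : Matrix m k R) (i : m) :
    (X.updateRow i 0)ᵀ * X.updateRow i 0 = Xᵀ * X - vecMulVec (X i) (X i) := by
  ext a b
  simp only [mul_apply, transpose_apply, updateRow_apply, sub_apply, vecMulVec_apply]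
  simp [ite_mul, mul_ite, Finset.sum_ite, Finset.filter_ne', Finset.sum_erase_eq_sub]

section RankOneUpdate

variable [Fintype k] [DecidableEq k] [Field 𝕜] {M : Matrix k k 𝕜} (a : 𝕜) (x : k → 𝕜)

theorem add_smul_vecMulVec_mulVec_inv_mulVec (hM : IsUnit M.det) :
    (M + a • vecMulVec x x) *ᵥ (M⁻¹ *ᵥ x) = (1 + a * (x ⬝ᵥ M⁻¹ *ᵥ x)) • x := by
  rw [add_mulVec, mulVec_mulVec, mul_nonsing_inv _ hM, one_mulVec, smul_mulVec, vecMulVec_mulVec]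
  simp [add_smul, smul_smul]

theorem one_add_mul_dotProduct_inv_mulVec_ne_zero (hM : IsUnit M.det)
    (hMx : IsUnit (M + a • vecMulVec x x).det) : 1 + a * (x ⬝ᵥ M⁻¹ *ᵥ x) ≠ 0 := by
  intro hγ
  have hu : M⁻¹ *ᵥ x = 0 := by
    have h := congrArg ((M + a • vecMulVec x x)⁻¹ *ᵥ ·)
      (add_smul_vecMulVec_mulVec_inv_mulVec a x hM)
    rwa [mulVec_mulVec, nonsing_inv_mul _ hMx, one_mulVec, hγ, zero_smul, mulVec_zero] at h
  have hx : x = 0 := by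
    simpa [mulVec_mulVec, mul_nonsing_inv _ hM] using congrArg (M *ᵥ ·) hu
  simp [hx] at hγ

theorem inv_add_smul_vecMulVec_mulVec (hM : IsUnit M.det)
    (hMx : IsUnit (M + a • vecMulVec x x).det) :
    (M + a • vecMulVec x x)⁻¹ *ᵥ x = (1 + a * (x ⬝ᵥ M⁻¹ *ᵥ x))⁻¹ • (M⁻¹ *ᵥ x) := by
  have hγ := one_add_mul_dotProduct_inv_mulVec_ne_zero a x hM hMx
  calc (M + a • vecMulVec x x)⁻¹ *ᵥ x
      = (M + a • vecMulVec x x)⁻¹ *ᵥ ((1 + a * (x ⬝ᵥ M⁻¹ *ᵥ x))⁻¹ •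
          (M + a • vecMulVec x x) *ᵥ (M⁻¹ *ᵥ x)) := by
        rw [add_smul_vecMulVec_mulVec_inv_mulVec a x hM, inv_smul_smul₀ hγ]
    _ = (1 + a * (x ⬝ᵥ M⁻¹ *ᵥ x))⁻¹ • (M⁻¹ *ᵥ x) := by
        rw [mulVec_smul, mulVec_mulVec, nonsing_inv_mul _ hMx, one_mulVec]

theorem dotProduct_inv_add_smul_vecMulVec_mulVec (hM : IsUnit M.det)
    (hMx : IsUnit (M + a • vecMulVec x x).det) :
    x ⬝ᵥ (M + a • vecMulVec x x)⁻¹ *ᵥ x = (x ⬝ᵥ M⁻¹ *ᵥ x) / (1 + a * (x ⬝ᵥ M⁻¹ *ᵥ x)) := by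
  rw [inv_add_smul_vecMulVec_mulVec a x hM hMx, dotProduct_smul, smul_eq_mul, inv_mul_eq_div]

theorem dotProduct_sq_mulVec_of_isSymm {N : Matrix k k 𝕜} (hN : N.IsSymm) (y : k → 𝕜) :
    y ⬝ᵥ (N ^ 2) *ᵥ y = (N *ᵥ y) ⬝ᵥ (N *ᵥ y) := by
  rw [sq, ← mulVec_mulVec, dotProduct_mulVec, ← mulVec_transpose, hN]

theorem dotProduct_inv_add_smul_vecMulVec_sq_mulVec (hM : IsUnit M.det) (hMs : M.IsSymm)
    (hMx : IsUnit (M + a • vecMulVec x x).det) :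
    x ⬝ᵥ ((M + a • vecMulVec x x)⁻¹ ^ 2) *ᵥ x =
      (x ⬝ᵥ (M⁻¹ ^ 2) *ᵥ x) / (1 + a * (x ⬝ᵥ M⁻¹ *ᵥ x)) ^ 2 := by
  have hsymm : (M + a • vecMulVec x x).IsSymm :=
    hMs.add ((by ext; simp [vecMulVec_apply, mul_comm] : (vecMulVec x x).IsSymm).smul a)
  rw [dotProduct_sq_mulVec_of_isSymm hsymm.inv, dotProduct_sq_mulVec_of_isSymm hMs.inv,
    inv_add_smul_vecMulVec_mulVec a x hM hMx, smul_dotProduct, dotProduct_smul, smul_smul,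
    smul_eq_mul, ← sq, inv_pow, inv_mul_eq_div]

end RankOneUpdate

section Resolvent

variable [Fintype m] [Fintype k] [DecidableEq m] [DecidableEq k] [Field 𝕜]

theorem inv_smul_mul_transpose_add_smul_one (X : Matrix m k 𝕜) {c μ : 𝕜} (hμ : μ ≠ 0)
    (hB : IsUnit (c • (Xᵀ * X) + μ • 1).det) :
    (c • (X * Xᵀ) + μ • 1)⁻¹ = μ⁻¹ • (1 - c • (X * (c • (Xᵀ * X) + μ • 1)⁻¹ * Xᵀ)) := by
  set B := c • (Xᵀ * X) + μ • (1 : Matrix k k 𝕜)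
  have hXB : (c • (X * Xᵀ) + μ • 1) * X = X * B := by
    simp only [B, Matrix.add_mul, Matrix.mul_add, Matrix.smul_mul, Matrix.mul_smul,
      Matrix.one_mul, Matrix.mul_one, Matrix.mul_assoc]
  refine inv_eq_right_inv ?_
  rw [mul_smul_comm, mul_sub, mul_one, mul_smul_comm, ← Matrix.mul_assoc, ← Matrix.mul_assoc, hXB,
    Matrix.mul_assoc X, mul_nonsing_inv _ hB, Matrix.mul_one, add_sub_cancel_left, smul_smul,
    inv_mul_cancel₀ hμ, one_smul]

theorem inv_smul_mul_transpose_add_smul_one_sq (X : Matrix m k 𝕜) {c μ : 𝕜} (hμ : μ ≠ 0)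
    (hB : IsUnit (c • (Xᵀ * X) + μ • 1).det) :
    (c • (X * Xᵀ) + μ • 1)⁻¹ ^ 2 = μ⁻¹ ^ 2 •
      (1 - c • (X * ((c • (Xᵀ * X) + μ • 1)⁻¹ + μ • (c • (Xᵀ * X) + μ • 1)⁻¹ ^ 2) * Xᵀ)) := by
  rw [inv_smul_mul_transpose_add_smul_one X hμ hB, smul_pow]
  congr 1
  set B := c • (Xᵀ * X) + μ • (1 : Matrix k k 𝕜)
  set P := c • (X * B⁻¹ * Xᵀ)
  set Q := c • (X * (μ • B⁻¹ ^ 2) * Xᵀ)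
  have hPP : P * P = P - Q := by
    have hXX : c • (Xᵀ * X) = B - μ • 1 := by simp [B]
    calc P * P = c • (X * (B⁻¹ * (c • (Xᵀ * X)) * B⁻¹) * Xᵀ) := by
          simp only [P, Matrix.smul_mul, Matrix.mul_smul, Matrix.mul_assoc, smul_smul]
      _ = P - Q := by
          rw [hXX, Matrix.mul_sub, Matrix.sub_mul, nonsing_inv_mul _ hB, Matrix.one_mul,
            Matrix.mul_smul, Matrix.smul_mul, Matrix.mul_one,
            Matrix.mul_sub, Matrix.sub_mul, smul_sub, ← sq]
  have hPQ : c • (X * (B⁻¹ + μ • B⁻¹ ^ 2) * Xᵀ) = P + Q := by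
    simp only [P, Q, Matrix.mul_add, Matrix.add_mul, smul_add]
  rw [hPQ, sq, sub_mul, mul_sub, mul_sub, hPP]
  noncomm_ring

theorem inv_smul_mul_transpose_add_smul_one_sq_apply_self (X : Matrix m k 𝕜) {c μ : 𝕜}
    (hμ : μ ≠ 0) (hB : IsUnit (c • (Xᵀ * X) + μ • 1).det) (i : m) {M : Matrix k k 𝕜}
    (hM : IsUnit M.det) (hMs : M.IsSymm)
    (hMi : c • (Xᵀ * X) + μ • 1 = M + c • vecMulVec (X i) (X i)) :
    ((c • (X * Xᵀ) + μ • 1)⁻¹ ^ 2 : Matrix m m 𝕜) i i =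
      (1 + c * (X i ⬝ᵥ (M⁻¹ - μ • M⁻¹ ^ 2) *ᵥ X i)) / (μ + μ * c * (X i ⬝ᵥ M⁻¹ *ᵥ X i)) ^ 2 := by
  have hMx : IsUnit (M + c • vecMulVec (X i) (X i)).det := hMi ▸ hB
  have hγ := one_add_mul_dotProduct_inv_mulVec_ne_zero c (X i) hM hMx
  rw [inv_smul_mul_transpose_add_smul_one_sq X hμ hB, hMi, Matrix.smul_apply, Matrix.sub_apply,
    one_apply_eq, Matrix.smul_apply, mul_mul_transpose_apply, add_mulVec, dotProduct_add,
    smul_mulVec, dotProduct_smul, dotProduct_inv_add_smul_vecMulVec_mulVec _ _ hM hMx,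
    dotProduct_inv_add_smul_vecMulVec_sq_mulVec _ _ hM hMs hMx, sub_mulVec, dotProduct_sub,
    smul_mulVec, dotProduct_smul]
  simp only [smul_eq_mul]
  field_simp
  ring

end Resolvent

theorem posDef_smul_transpose_mul_self_add_smul_one [Fintype m] [Fintype k] [DecidableEq k]
    (X : Matrix m k ℝ) {c μ : ℝ} (hc : 0 ≤ c) (hμ : 0 < μ) :
    (c • (Xᵀ * X) + μ • (1 : Matrix k k ℝ)).PosDef := by
  have hX : (Xᵀ * X).PosSemidef := by simpa using posSemidef_conjTranspose_mul_self X
  exact PosDef.posSemidef_add (hX.smul hc) (PosDef.one.smul hμ)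

end Matrix

theorem stmt13_general (n p : ℕ) (μ : ℝ) (hμ : 0 < μ)
    (X : Matrix (Fin n) (Fin p) ℝ)
    (S : Fin n → Matrix (Fin p) (Fin p) ℝ)
    (hS : ∀ i, S i = (((1:ℝ)/n) • (Xᵀ * X) - ((1:ℝ)/n) • Matrix.vecMulVec (X i) (X i)
      + μ • (1 : Matrix (Fin p) (Fin p) ℝ))⁻¹) :
    (1 / (n:ℝ)) * Matrix.trace (((((1:ℝ)/n) • (X * Xᵀ)
        + μ • (1 : Matrix (Fin n) (Fin n) ℝ))⁻¹) ^ 2) =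
    (1 / (n:ℝ)) * ∑ i,
      (1 + (1 / (n:ℝ)) * (X i ⬝ᵥ (S i - μ • (S i) ^ 2).mulVec (X i))) /
        (μ + (μ / n) * (X i ⬝ᵥ (S i).mulVec (X i))) ^ 2 := by
  have hc : (0 : ℝ) ≤ 1 / n := by positivity
  have hB := (posDef_smul_transpose_mul_self_add_smul_one X hc hμ).isUnit.map detMonoidHom
  rw [trace, Finset.mul_sum, Finset.mul_sum]
  refine Finset.sum_congr rfl fun i _ => congrArg _ ?_
  have hMpd : (((1:ℝ)/n) • (Xᵀ * X) - ((1:ℝ)/n) • vecMulVec (X i) (X i) + μ • 1).PosDef := by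
    rw [← smul_sub, ← transpose_mul_self_updateRow_zero]
    exact posDef_smul_transpose_mul_self_add_smul_one _ hc hμ
  rw [diag_apply, inv_smul_mul_transpose_add_smul_one_sq_apply_self X hμ.ne' hB i
    (hMpd.isUnit.map detMonoidHom) (isHermitian_iff_isSymm.mp hMpd.isHermitian) (by abel),
    ← hS i, mul_one_div]

/-- Let `X ∈ ℝ^{n×p}` with rows `x₁,…,xₙ` and `μ > 0`. With
`S⁽∖ⁱ⁾ = ((1/n)XᵀX − (1/n)xᵢxᵢᵀ + μI)⁻¹`, one has
`(1/n)·tr(((1/n)XXᵀ + μIₙ)⁻²)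
  = (1/n)·Σᵢ (1 + (1/n)·xᵢᵀ(S⁽∖ⁱ⁾ − μ(S⁽∖ⁱ⁾)²)xᵢ) / (μ + (μ/n)·xᵢᵀS⁽∖ⁱ⁾xᵢ)²`. -/
theorem stmt13 (n p : ℕ) (hn : 0 < n) (μ : ℝ) (hμ : 0 < μ)
    (X : Matrix (Fin n) (Fin p) ℝ)
    (S : Fin n → Matrix (Fin p) (Fin p) ℝ)
    (hS : ∀ i, S i = (((1:ℝ)/n) • (Xᵀ * X) - ((1:ℝ)/n) • Matrix.vecMulVec (X i) (X i)
      + μ • (1 : Matrix (Fin p) (Fin p) ℝ))⁻¹) :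
    (1 / (n:ℝ)) * Matrix.trace (((((1:ℝ)/n) • (X * Xᵀ)
        + μ • (1 : Matrix (Fin n) (Fin n) ℝ))⁻¹) ^ 2) =
    (1 / (n:ℝ)) * ∑ i,
      (1 + (1 / (n:ℝ)) * (X i ⬝ᵥ (S i - μ • (S i) ^ 2).mulVec (X i))) /
        (μ + (μ / n) * (X i ⬝ᵥ (S i).mulVec (X i))) ^ 2 :=
  stmt13_general n p μ hμ X S hS
end
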